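/- Let Z_1,…,Z_n be i.i.d. random variables taking values in a measurable space, let h be a symmetric kernel, and suppose there exist L > 0 and C² = E exp(|h(Z_1,Z_2)|/L) < ∞. Then the U-statistic U = (1/(n(n−1))) Σ_{i≠j} h(Z_i,Z_j) satisfies, for every u > 0, P( U − E U > 2L( C√(6u/n) + 3u/n ) ) ≤ exp(−u). -/

import Mathlib

open MeasureTheory ProbabilityTheory Finset
open Real

lemma aux_exp_quad (y : ℝ) : exp y ≤ 1 + y + y^2/2 * exp |y| := by
  rcases le_or_gt 0 y with hy | hy
  · rw [abs_of_nonneg hy]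
    have h1 : ∫ s in (0:ℝ)..y, (exp s - 1) = exp y - 1 - y := by
      rw [intervalIntegral.integral_sub (intervalIntegral.intervalIntegrable_exp) intervalIntegrable_const]
      simp [integral_exp]
    have h3 : ∫ s in (0:ℝ)..y, s * exp y = y^2/2 * exp y := by
      rw [intervalIntegral.integral_mul_const, integral_id]
      ring
    have h2 : ∫ s in (0:ℝ)..y, (exp s - 1) ≤ ∫ s in (0:ℝ)..y, s * exp y := by
      apply intervalIntegral.integral_mono_on hy
        (intervalIntegral.intervalIntegrable_exp.sub intervalIntegrable_const)
        ((intervalIntegral.intervalIntegrable_id.mul_const _))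
      intro s hs
      rcases hs with ⟨hs0, hsy⟩
      have := Real.add_one_le_exp (-s)
      have h4 : exp s - 1 ≤ s * exp s := by
        have hne : exp (-s) = (exp s)⁻¹ := Real.exp_neg s
        have hpos : 0 < exp s := Real.exp_pos s
        -- from -s + 1 ≤ exp (-s) = (exp s)⁻¹, multiply by exp s
        have h7 : (-s + 1) * exp s ≤ 1 := by
          calc (-s + 1) * exp s ≤ (exp s)⁻¹ * exp s := by
                apply mul_le_mul_of_nonneg_right _ hpos.le
                rw [← hne]; exact this
            _ = 1 := inv_mul_cancel₀ hpos.ne'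
        nlinarith
      have h5 : s * exp s ≤ s * exp y := by
        apply mul_le_mul_of_nonneg_left _ hs0
        exact Real.exp_le_exp.mpr hsy
      linarith
    linarith [h1 ▸ h2, h3]
  · have key : exp y ≤ 1 + y + y^2/2 := by
      have h1 : ∫ s in y..(0:ℝ), (1 - exp s) = exp y - 1 - y := by
        rw [intervalIntegral.integral_sub intervalIntegrable_const intervalIntegral.intervalIntegrable_exp]
        simp [integral_exp]
        ring
      have h3 : ∫ s in y..(0:ℝ), (-s) = y^2/2 := by
        rw [intervalIntegral.integral_neg, integral_id]
        ring
      have h2 : ∫ s in y..(0:ℝ), (1 - exp s) ≤ ∫ s in y..(0:ℝ), (-s) := by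
        apply intervalIntegral.integral_mono_on hy.le
          (intervalIntegrable_const.sub intervalIntegral.intervalIntegrable_exp)
          (intervalIntegral.intervalIntegrable_id).neg
        intro s _
        show (1:ℝ) - exp s ≤ -s
        have := Real.add_one_le_exp s
        linarith
      have := h1 ▸ h2
      linarith [h3 ▸ this]
    have h6 : (1:ℝ) ≤ exp |y| := Real.one_le_exp (abs_nonneg y)
    nlinarith [sq_nonneg y]

lemma aux_sq_le (L x : ℝ) (hL : 0 < L) :
    x^2 ≤ 16*L^2*exp (-2) * exp (|x|/(2*L)) := by
  have h1 : |x|/(4*L) ≤ exp (|x|/(4*L) - 1) := by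
    have := Real.add_one_le_exp (|x|/(4*L) - 1)
    linarith
  have h2 : (|x|/(4*L))^2 ≤ (exp (|x|/(4*L) - 1))^2 := by
    apply pow_le_pow_left₀ (by positivity) h1
  have h3 : (exp (|x|/(4*L) - 1))^2 = exp (|x|/(2*L) - 2) := by
    rw [sq, ← Real.exp_add]
    congr 1
    field_simp
    ring
  have h4 : exp (|x|/(2*L) - 2) = exp (-2) * exp (|x|/(2*L)) := by
    rw [← Real.exp_add]; ring_nf
  have h5 : (|x|/(4*L))^2 = x^2/(16*L^2) := by
    rw [div_pow, sq_abs]; ring_nf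
  rw [h5, h3, h4] at h2
  have h6 : (0:ℝ) < 16*L^2 := by positivity
  calc x^2 = 16*L^2 * (x^2/(16*L^2)) := by field_simp
    _ ≤ 16*L^2 * (exp (-2) * exp (|x|/(2*L))) := by
        apply mul_le_mul_of_nonneg_left h2 (le_of_lt h6)
    _ = 16*L^2*exp (-2) * exp (|x|/(2*L)) := by ring


lemma aux_arith (u L C : ℝ) (n N : ℕ) (hu : 0 < u) (hL : 0 < L) (hC : 0 < C)
    (hN1 : 1 ≤ N) (hN3 : n ≤ 3 * N) (hn : 2 ≤ n) :
    u ≤ (min (1/(2*L)) (Real.sqrt (u/N) / (2*C*L)) * N)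
          * (2*L*(C*Real.sqrt (6*u/n) + 3*u/n))
        - (N:ℝ) * (min (1/(2*L)) (Real.sqrt (u/N) / (2*C*L)))^2
          * (8*L^2*C^2*Real.exp (-2)) := by
  have hn0 : (0:ℝ) < n := by positivity
  have hN0 : (0:ℝ) < N := by exact_mod_cast hN1
  set t := min (1/(2*L)) (Real.sqrt (u/N) / (2*C*L)) with hts
  set s := Real.sqrt (u * N) with hss
  have hs0 : 0 ≤ s := Real.sqrt_nonneg _
  have ht0 : 0 ≤ t := le_min (by positivity) (by positivity)
  have htl : t ≤ Real.sqrt (u/N) / (2*C*L) := min_le_right _ _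
  -- s1 * N = s
  have hs1N : Real.sqrt (u/N) * N = s := by
    rw [hss, show u * N = (u/N) * N^2 by field_simp, Real.sqrt_mul (by positivity),
      Real.sqrt_sq hN0.le]
  -- N * sqrt(6u/n) ≥ sqrt 2 * s
  have hlin1 : Real.sqrt 2 * s ≤ (N:ℝ) * Real.sqrt (6*u/n) := by
    have e1 : (N:ℝ) * Real.sqrt (6*u/n) = Real.sqrt ((6*u/n) * N^2) := by
      rw [Real.sqrt_mul (by positivity), Real.sqrt_sq hN0.le]; ring
    have e2 : Real.sqrt 2 * s = Real.sqrt (2 * (u*N)) := by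
      rw [hss, ← Real.sqrt_mul (by norm_num : (0:ℝ) ≤ 2)]
    rw [e1, e2]
    apply Real.sqrt_le_sqrt
    rw [div_mul_eq_mul_div, le_div_iff₀ hn0]
    have hc3 : (n:ℝ) ≤ 3*N := by exact_mod_cast hN3
    nlinarith [mul_le_mul_of_nonneg_left hc3 (by positivity : (0:ℝ) ≤ 2*u*(N:ℝ))]
  -- N * (3u/n) ≥ u
  have hlin2 : u ≤ (N:ℝ) * (3*u/n) := by
    rw [mul_div_assoc']
    rw [le_div_iff₀ hn0]
    have : (n:ℝ) ≤ 3*N := by exact_mod_cast hN3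
    nlinarith
  -- quadratic term bound: N*t^2*K ≤ 4*L*C*exp(-2)*t*s
  have hquad : (N:ℝ) * t^2 * (8*L^2*C^2*Real.exp (-2))
      ≤ t * s * (L*C) * (4 * Real.exp (-2)) := by
    have h1 : (N:ℝ) * t^2 * (8*L^2*C^2*Real.exp (-2))
        ≤ (N:ℝ) * (t * (Real.sqrt (u/N) / (2*C*L))) * (8*L^2*C^2*Real.exp (-2)) := by
      have : t^2 ≤ t * (Real.sqrt (u/N) / (2*C*L)) := by
        rw [sq]
        exact mul_le_mul_of_nonneg_left htl ht0
      apply mul_le_mul_of_nonneg_right _ (by positivity)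
      exact mul_le_mul_of_nonneg_left this hN0.le
    have h2 : (N:ℝ) * (t * (Real.sqrt (u/N) / (2*C*L))) * (8*L^2*C^2*Real.exp (-2))
        = t * (Real.sqrt (u/N) * N) * (L*C) * (4 * Real.exp (-2)) := by
      field_simp
      ring
    rw [h2, hs1N] at h1
    exact h1
  -- exp(-2) ≤ 1/7
  have hexp2 : Real.exp (-2) ≤ 1/7 := by
    rw [Real.exp_neg]
    rw [inv_le_comm₀ (Real.exp_pos _) (by norm_num)]
    have h1 : (2.7:ℝ) ≤ Real.exp 1 := by
      have := Real.exp_one_gt_d9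
      linarith
    have : Real.exp 2 = Real.exp 1 * Real.exp 1 := by
      rw [← Real.exp_add]; norm_num
    rw [this]
    nlinarith
  have hsqrt2 : (1.41:ℝ) ≤ Real.sqrt 2 := by
    rw [show (1.41:ℝ) = Real.sqrt (1.41^2) from (Real.sqrt_sq (by norm_num)).symm]
    apply Real.sqrt_le_sqrt
    norm_num
  -- main: t*N*r - quad ≥ 2*L*t*u + 2*t*s*L*C
  have hmain : 2*L*t*u + 2*(t*s*(L*C))
      ≤ (t * N) * (2*L*(C*Real.sqrt (6*u/n) + 3*u/n))
        - (N:ℝ) * t^2 * (8*L^2*C^2*Real.exp (-2)) := by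
    have e1 : (t * N) * (2*L*(C*Real.sqrt (6*u/n) + 3*u/n))
        = 2*L*C*t*((N:ℝ)*Real.sqrt (6*u/n)) + 2*L*t*((N:ℝ)*(3*u/n)) := by ring
    have h1 : 2*L*C*t*(Real.sqrt 2 * s) ≤ 2*L*C*t*((N:ℝ)*Real.sqrt (6*u/n)) :=
      mul_le_mul_of_nonneg_left hlin1 (by positivity)
    have h2 : 2*L*t*u ≤ 2*L*t*((N:ℝ)*(3*u/n)) :=
      mul_le_mul_of_nonneg_left hlin2 (by positivity)
    have h3 : t * s * (L*C) * (4 * Real.exp (-2)) ≤ t * s * (L*C) * (4/7) := by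
      apply mul_le_mul_of_nonneg_left _ (by positivity)
      linarith
    have h4 : 2*(t*s*(L*C)) + t * s * (L*C) * (4/7) ≤ 2*L*C*t*(Real.sqrt 2 * s) := by
      have hts0 : 0 ≤ t * s * (L * C) := by positivity
      nlinarith [hsqrt2, hts0]
    rw [e1]
    linarith
  -- final case analysis
  rcases le_total (1/(2*L)) (Real.sqrt (u/N) / (2*C*L)) with hcase | hcase
  · have htt : t = 1/(2*L) := min_eq_left hcase
    have : 2*L*t*u = u := by rw [htt]; field_simp
    have h5 : 0 ≤ 2*(t*s*(L*C)) := by positivity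
    linarith
  · have htt : t = Real.sqrt (u/N) / (2*C*L) := min_eq_right hcase
    have hprod : Real.sqrt (u/N) * Real.sqrt (u*N) = u := by
      rw [← Real.sqrt_mul (by positivity)]
      rw [show u/N*(u*N) = u^2 by field_simp]
      exact Real.sqrt_sq hu.le
    have key : 2*(t*s*(L*C)) = u := by
      rw [htt, hss]
      have hone : (2*(L*C))/(2*C*L) = 1 := by field_simp
      calc 2*(Real.sqrt (u/N)/(2*C*L)*Real.sqrt (u*N)*(L*C))
          = (Real.sqrt (u/N)*Real.sqrt (u*N)) * ((2*(L*C))/(2*C*L)) := by ring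
        _ = (Real.sqrt (u/N)*Real.sqrt (u*N)) * 1 := by rw [hone]
        _ = u := by rw [mul_one, hprod]
    have h5 : 0 ≤ 2*L*t*u := by positivity
    linarith


lemma aux_perm_card {n : ℕ} {a b i j : Fin n} (hab : a ≠ b) (hij : i ≠ j) :
    (univ.filter fun σ : Equiv.Perm (Fin n) => σ a = i ∧ σ b = j).card
      = (univ.filter fun σ : Equiv.Perm (Fin n) => σ a = a ∧ σ b = b).card := by
  obtain ⟨ρ, hρa, hρb⟩ : ∃ ρ : Equiv.Perm (Fin n), ρ a = i ∧ ρ b = j := by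
    set c := Equiv.swap a i b with hc
    have hci : c ≠ i := by
      intro hcontr
      have h2 : Equiv.swap a i a = i := Equiv.swap_apply_left a i
      have := (Equiv.swap a i).injective (hcontr.trans h2.symm)
      exact hab this.symm
    refine ⟨(Equiv.swap c j) * (Equiv.swap a i), ?_, ?_⟩
    · simp only [Equiv.Perm.mul_apply, Equiv.swap_apply_left]
      exact Equiv.swap_apply_of_ne_of_ne hci.symm hij
    · simp only [Equiv.Perm.mul_apply, ← hc]
      exact Equiv.swap_apply_left c j
  apply Finset.card_bij' (fun σ _ => ρ⁻¹ * σ) (fun τ _ => ρ * τ)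
  · intro σ hσ
    simp only [mem_filter, mem_univ, true_and] at hσ ⊢
    refine ⟨?_, ?_⟩
    · show ρ⁻¹ (σ a) = a
      rw [hσ.1, ← hρa, Equiv.Perm.inv_def, Equiv.symm_apply_apply]
    · show ρ⁻¹ (σ b) = b
      rw [hσ.2, ← hρb, Equiv.Perm.inv_def, Equiv.symm_apply_apply]
  · intro τ hτ
    simp only [mem_filter, mem_univ, true_and] at hτ ⊢
    refine ⟨?_, ?_⟩
    · show ρ (τ a) = i
      rw [hτ.1, hρa]
    · show ρ (τ b) = j
      rw [hτ.2, hρb]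
  · intro σ _; simp [mul_assoc]
  · intro τ _; simp [mul_assoc]

lemma aux_perm_sum {n : ℕ} (hn : 2 ≤ n) (f : Fin n → Fin n → ℝ) {a b : Fin n} (hab : a ≠ b) :
    ∑ σ : Equiv.Perm (Fin n), f (σ a) (σ b)
      = (Fintype.card (Equiv.Perm (Fin n)) : ℝ) / ((n : ℝ) * ((n:ℝ) - 1))
        * ∑ i, ∑ j ∈ univ \ {i}, f i j := by
  classical
  set c : ℕ := (univ.filter fun σ : Equiv.Perm (Fin n) => σ a = a ∧ σ b = b).card with hc
  have key : ∀ g : Fin n → Fin n → ℝ,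
      ∑ σ : Equiv.Perm (Fin n), g (σ a) (σ b)
        = (c:ℝ) * ∑ i, ∑ j ∈ univ \ {i}, g i j := by
    intro g
    have step1 : ∀ σ : Equiv.Perm (Fin n),
        g (σ a) (σ b) = ∑ i, ∑ j ∈ univ \ {i},
          (if σ a = i ∧ σ b = j then g i j else 0) := by
      intro σ
      have hone : ∀ i : Fin n, (∑ j ∈ univ \ {i}, if σ a = i ∧ σ b = j then g i j else 0)
          = if σ a = i then g i (σ b) else 0 := by
        intro i
        by_cases hi : σ a = i
        · subst hi
          rw [if_pos rfl]
          have hmem : σ b ∈ univ \ {σ a} := by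
            simp only [mem_sdiff, mem_univ, true_and, mem_singleton]
            exact fun hcontr => hab (σ.injective hcontr).symm
          rw [Finset.sum_eq_single (σ b)]
          · simp
          · intro j _ hj
            rw [if_neg]
            rintro ⟨-, h2⟩
            exact hj h2.symm
          · intro hcontr
            exact absurd hmem hcontr
        · rw [if_neg hi]
          apply Finset.sum_eq_zero
          intro j _
          rw [if_neg]
          rintro ⟨h1, -⟩
          exact hi h1
      rw [Finset.sum_congr rfl (fun i _ => hone i)]
      rw [Finset.sum_eq_single (σ a)]
      · simp
      · intro i _ hi
        rw [if_neg (fun hcontr => hi hcontr.symm)]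
      · intro hcontr
        exact absurd (mem_univ (σ a)) hcontr
    rw [Finset.sum_congr rfl (fun σ _ => step1 σ)]
    rw [Finset.sum_comm]
    rw [Finset.sum_congr rfl (fun (i : Fin n) (_ : i ∈ univ) => Finset.sum_comm (s := univ) (t := univ \ {i}))]
    have inner : ∀ i : Fin n, ∑ j ∈ univ \ {i},
        (∑ σ : Equiv.Perm (Fin n), if σ a = i ∧ σ b = j then g i j else 0)
        = ∑ j ∈ univ \ {i}, (c:ℝ) * g i j := by
      intro i
      apply Finset.sum_congr rfl
      intro j hj
      have hji : j ≠ i := by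
        simp only [mem_sdiff, mem_univ, true_and, mem_singleton] at hj
        exact hj
      rw [← Finset.sum_filter, Finset.sum_const,
        aux_perm_card hab (fun hcontr => hji (hcontr.symm)), nsmul_eq_mul]
    calc ∑ i, ∑ j ∈ univ \ {i}, (∑ σ : Equiv.Perm (Fin n), if σ a = i ∧ σ b = j then g i j else 0)
        = ∑ i, ∑ j ∈ univ \ {i}, (c:ℝ) * g i j := Finset.sum_congr rfl (fun i _ => inner i)
      _ = (c:ℝ) * ∑ i, ∑ j ∈ univ \ {i}, g i j := by
          rw [Finset.mul_sum]
          apply Finset.sum_congr rfl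
          intro i _
          rw [Finset.mul_sum]
    -- need to fix: goal currently has sum_comm'd version
  have hcount : (Fintype.card (Equiv.Perm (Fin n)) : ℝ) = (c:ℝ) * ((n:ℝ) * ((n:ℝ) - 1)) := by
    have h1 := key (fun _ _ => (1:ℝ))
    simp only [Finset.sum_const, nsmul_eq_mul, mul_one, card_univ] at h1
    have hcard : ∀ i : Fin n, ((univ \ {i} : Finset (Fin n)).card : ℝ) = (n:ℝ) - 1 := by
      intro i
      rw [Finset.card_sdiff_of_subset (by simp)]
      simp only [card_univ, Fintype.card_fin, Finset.card_singleton]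
      have : 1 ≤ n := by omega
      push_cast [this]
      ring
    rw [h1]
    rw [Finset.sum_congr rfl (fun i _ => hcard i), Finset.sum_const, nsmul_eq_mul, card_univ,
      Fintype.card_fin]
    try ring
  have hn0 : (n:ℝ) * ((n:ℝ) - 1) ≠ 0 := by
    have h2 : (2:ℝ) ≤ (n:ℝ) := by exact_mod_cast hn
    have : (0:ℝ) < (n:ℝ) * ((n:ℝ) - 1) := by nlinarith
    exact this.ne'
  rw [key f, hcount]
  field_simp
  have hn1 : (n:ℝ) - 1 ≠ 0 := fun h0 => hn0 (by rw [h0, mul_zero])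
  rw [mul_div_assoc, div_self hn1, mul_one]


lemma aux_indep_prod {Ω E : Type*} [MeasurableSpace Ω] [MeasurableSpace E] [Nonempty E]
    {μ : Measure Ω} [IsProbabilityMeasure μ] {n : ℕ}
    {Z : Fin n → Ω → E} (hZ : ∀ i, Measurable (Z i))
    (hIndep : iIndepFun Z μ)
    (g : E → E → ℝ) (hg : Measurable fun p : E × E => g p.1 p.2)
    (a b : ℕ → Fin n) (m : ℕ)
    (hdisj : ∀ k l, k < m → l < m → k ≠ l →
      a k ≠ a l ∧ a k ≠ b l ∧ b k ≠ a l ∧ b k ≠ b l)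
    (hint : ∀ k, k < m → Integrable (fun ω => g (Z (a k) ω) (Z (b k) ω)) μ) :
    Integrable (fun ω => ∏ k ∈ range m, g (Z (a k) ω) (Z (b k) ω)) μ ∧
    ∫ ω, ∏ k ∈ range m, g (Z (a k) ω) (Z (b k) ω) ∂μ
      = ∏ k ∈ range m, ∫ ω, g (Z (a k) ω) (Z (b k) ω) ∂μ := by
  classical
  induction m with
  | zero => simp
  | succ m ih =>
    obtain ⟨ih1, ih2⟩ := ih
      (fun k l hk hl => hdisj k l (by omega) (by omega))
      (fun k hk => hint k (by omega))
    set S : Finset (Fin n) := (range m).biUnion (fun k => {a k, b k}) with hS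
    set T : Finset (Fin n) := {a m, b m} with hT
    have hST : Disjoint S T := by
      rw [Finset.disjoint_left]
      intro x hxS hxT
      simp only [hS, Finset.mem_biUnion, Finset.mem_range, Finset.mem_insert,
        Finset.mem_singleton] at hxS
      simp only [hT, Finset.mem_insert, Finset.mem_singleton] at hxT
      obtain ⟨k, hk, hx⟩ := hxS
      have hd := hdisj k m (by omega) (by omega) (by omega)
      rcases hx with rfl | rfl <;> rcases hxT with h | h <;> tauto
    have hIF : IndepFun (fun ω (i : S) => Z i ω) (fun ω (i : T) => Z i ω) μ :=
      hIndep.indepFun_finset S T hST hZ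
    -- extension functions
    have hextmeas : ∀ (F : Finset (Fin n)) (i : Fin n),
        Measurable (fun v : {x // x ∈ F} → E =>
          if hi : i ∈ F then v ⟨i, hi⟩ else Classical.arbitrary E) := by
      intro F i
      by_cases hi : i ∈ F
      · simpa only [dif_pos hi] using measurable_pi_apply (⟨i, hi⟩ : {x // x ∈ F})
      · simpa only [dif_neg hi] using measurable_const
    set ext : ∀ (F : Finset (Fin n)), ({x // x ∈ F} → E) → Fin n → E :=
      fun F v i => if hi : i ∈ F then v ⟨i, hi⟩ else Classical.arbitrary E with hext
    have hextval : ∀ (F : Finset (Fin n)) (i : Fin n) (hi : i ∈ F) (ω : Ω),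
        ext F (fun l : {x // x ∈ F} => Z l.1 ω) i = Z i ω := by
      intro F i hi ω
      simp only [hext, dif_pos hi]
    set Φ : ({x // x ∈ S} → E) → ℝ :=
      fun v => ∏ k ∈ range m, g (ext S v (a k)) (ext S v (b k)) with hΦ
    set Ψ : ({x // x ∈ T} → E) → ℝ :=
      fun v => g (ext T v (a m)) (ext T v (b m)) with hΨ
    have hΦm : Measurable Φ := by
      apply Finset.measurable_prod
      intro k _
      exact hg.comp ((hextmeas S (a k)).prodMk (hextmeas S (b k)))
    have hΨm : Measurable Ψ :=
      hg.comp ((hextmeas T (a m)).prodMk (hextmeas T (b m)))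
    have hcomp : IndepFun (fun ω => Φ (fun i : S => Z i ω)) (fun ω => Ψ (fun i : T => Z i ω)) μ :=
      hIF.comp hΦm hΨm
    have heq1 : (fun ω => Φ (fun i : S => Z i ω))
        = fun ω => ∏ k ∈ range m, g (Z (a k) ω) (Z (b k) ω) := by
      funext ω
      apply Finset.prod_congr rfl
      intro k hk
      rw [Finset.mem_range] at hk
      have haS : a k ∈ S := by
        simp only [hS, Finset.mem_biUnion]
        exact ⟨k, Finset.mem_range.mpr hk, by simp⟩
      have hbS : b k ∈ S := by
        simp only [hS, Finset.mem_biUnion]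
        exact ⟨k, Finset.mem_range.mpr hk, by simp⟩
      rw [hextval S _ haS, hextval S _ hbS]
    have heq2 : (fun ω => Ψ (fun i : T => Z i ω))
        = fun ω => g (Z (a m) ω) (Z (b m) ω) := by
      funext ω
      have haT : a m ∈ T := by simp [hT]
      have hbT : b m ∈ T := by simp [hT]
      rw [hΨ]
      simp only
      rw [hextval T _ haT, hextval T _ hbT]
    rw [heq1, heq2] at hcomp
    have hintm : Integrable (fun ω => g (Z (a m) ω) (Z (b m) ω)) μ := hint m (by omega)
    have hprodint : Integrable
        (fun ω => (∏ k ∈ range m, g (Z (a k) ω) (Z (b k) ω)) * g (Z (a m) ω) (Z (b m) ω)) μ :=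
      hcomp.integrable_mul ih1 hintm
    have hprodval : ∫ ω, (∏ k ∈ range m, g (Z (a k) ω) (Z (b k) ω)) * g (Z (a m) ω) (Z (b m) ω) ∂μ
        = (∫ ω, ∏ k ∈ range m, g (Z (a k) ω) (Z (b k) ω) ∂μ)
          * ∫ ω, g (Z (a m) ω) (Z (b m) ω) ∂μ :=
      hcomp.integral_fun_mul_eq_mul_integral ih1.aestronglyMeasurable hintm.aestronglyMeasurable
    constructor
    · have : (fun ω => ∏ k ∈ range (m+1), g (Z (a k) ω) (Z (b k) ω))
          = fun ω => (∏ k ∈ range m, g (Z (a k) ω) (Z (b k) ω)) * g (Z (a m) ω) (Z (b m) ω) := by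
        funext ω
        rw [Finset.prod_range_succ]
      rw [this]
      exact hprodint
    · have e1 : ∀ ω, ∏ k ∈ range (m+1), g (Z (a k) ω) (Z (b k) ω)
          = (∏ k ∈ range m, g (Z (a k) ω) (Z (b k) ω)) * g (Z (a m) ω) (Z (b m) ω) := by
        intro ω
        rw [Finset.prod_range_succ]
      calc ∫ ω, ∏ k ∈ range (m+1), g (Z (a k) ω) (Z (b k) ω) ∂μ
          = ∫ ω, (∏ k ∈ range m, g (Z (a k) ω) (Z (b k) ω)) * g (Z (a m) ω) (Z (b m) ω) ∂μ := by
            simp only [e1]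
        _ = (∫ ω, ∏ k ∈ range m, g (Z (a k) ω) (Z (b k) ω) ∂μ)
              * ∫ ω, g (Z (a m) ω) (Z (b m) ω) ∂μ := hprodval
        _ = ∏ k ∈ range (m+1), ∫ ω, g (Z (a k) ω) (Z (b k) ω) ∂μ := by
            rw [Finset.prod_range_succ, ih2]

lemma aux_mgf_bound {α : Type*} [MeasurableSpace α] (ν : Measure α) [IsProbabilityMeasure ν]
    (X : α → ℝ) (hX : AEStronglyMeasurable X ν) (L C t : ℝ) (hL : 0 < L)
    (ht0 : 0 ≤ t) (ht : t ≤ 1/(2*L))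
    (hint : Integrable (fun a => Real.exp (|X a|/L)) ν)
    (hC2 : ∫ a, Real.exp (|X a|/L) ∂ν ≤ C^2) :
    Integrable (fun a => Real.exp (t * X a)) ν ∧
    ∫ a, Real.exp (t * X a) ∂ν
      ≤ Real.exp (t * (∫ a, X a ∂ν) + t^2 * (8*L^2*C^2*Real.exp (-2))) := by
  have habs : ∀ a, |X a| ≤ L * exp (|X a|/L) := by
    intro a
    have h1 := Real.add_one_le_exp (|X a|/L)
    have : |X a|/L ≤ exp (|X a|/L) := by linarith
    calc |X a| = L * (|X a|/L) := by field_simp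
      _ ≤ L * exp (|X a|/L) := mul_le_mul_of_nonneg_left this hL.le
  have hXint : Integrable X ν := by
    refine (hint.const_mul L).mono' hX (Filter.Eventually.of_forall fun a => ?_)
    simpa using habs a
  have hdom : ∀ a, exp (t * X a) ≤ exp (|X a|/L) := by
    intro a
    apply Real.exp_le_exp.mpr
    have h1 : t * X a ≤ t * |X a| := mul_le_mul_of_nonneg_left (le_abs_self _) ht0
    have h2 : t * |X a| ≤ (1/(2*L)) * |X a| := mul_le_mul_of_nonneg_right ht (abs_nonneg _)
    have h3 : (1/(2*L)) * |X a| ≤ |X a|/L := by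
      rw [div_eq_mul_inv (|X a|)]
      have : (1/(2*L)) ≤ L⁻¹ := by
        rw [one_div]
        apply inv_anti₀ hL
        linarith
      calc (1/(2*L)) * |X a| ≤ L⁻¹ * |X a| := mul_le_mul_of_nonneg_right this (abs_nonneg _)
        _ = |X a| * L⁻¹ := mul_comm _ _
    linarith
  have hexpmeas : AEStronglyMeasurable (fun a => exp (t * X a)) ν :=
    (Real.continuous_exp.comp_aestronglyMeasurable (hX.const_mul t))
  have hexpint : Integrable (fun a => exp (t * X a)) ν := by
    refine hint.mono' hexpmeas (Filter.Eventually.of_forall fun a => ?_)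
    rw [Real.norm_eq_abs, abs_of_pos (Real.exp_pos _)]
    exact hdom a
  refine ⟨hexpint, ?_⟩
  set c : ℝ := t^2 * (8*L^2*Real.exp (-2)) with hc
  have hc0 : 0 ≤ c := by positivity
  have hpt : ∀ a, exp (t * X a) ≤ 1 + t * X a + c * exp (|X a|/L) := by
    intro a
    have h1 := aux_exp_quad (t * X a)
    have h2 : |t * X a| = t * |X a| := by
      rw [abs_mul, abs_of_nonneg ht0]
    have h3 : exp |t * X a| ≤ exp (|X a|/(2*L)) := by
      apply Real.exp_le_exp.mpr
      rw [h2]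
      calc t * |X a| ≤ (1/(2*L)) * |X a| := mul_le_mul_of_nonneg_right ht (abs_nonneg _)
        _ = |X a|/(2*L) := by ring
    have h4 : (X a)^2 * exp (|X a|/(2*L))
        ≤ 16*L^2*exp (-2) * exp (|X a|/L) := by
      calc (X a)^2 * exp (|X a|/(2*L))
          ≤ (16*L^2*exp (-2) * exp (|X a|/(2*L))) * exp (|X a|/(2*L)) := by
            apply mul_le_mul_of_nonneg_right (aux_sq_le L (X a) hL) (Real.exp_pos _).le
        _ = 16*L^2*exp (-2) * (exp (|X a|/(2*L)) * exp (|X a|/(2*L))) := by ring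
        _ = 16*L^2*exp (-2) * exp (|X a|/L) := by
            rw [← Real.exp_add]
            congr 2
            field_simp
            ring
    have h5 : (t * X a)^2/2 * exp |t * X a|
        ≤ c * exp (|X a|/L) := by
      have h6 : (t * X a)^2/2 * exp |t * X a| ≤ t^2/2 * ((X a)^2 * exp (|X a|/(2*L))) := by
        have : (t * X a)^2/2 * exp |t*X a| = t^2/2 * ((X a)^2 * exp |t * X a|) := by ring
        rw [this]
        apply mul_le_mul_of_nonneg_left _ (by positivity)
        exact mul_le_mul_of_nonneg_left h3 (sq_nonneg _)
      calc (t * X a)^2/2 * exp |t * X a| ≤ t^2/2 * ((X a)^2 * exp (|X a|/(2*L))) := h6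
        _ ≤ t^2/2 * (16*L^2*exp (-2) * exp (|X a|/L)) :=
            mul_le_mul_of_nonneg_left h4 (by positivity)
        _ = c * exp (|X a|/L) := by rw [hc]; ring
    linarith
  have hrhsint : Integrable (fun a => 1 + t * X a + c * exp (|X a|/L)) ν :=
    ((integrable_const 1).add (hXint.const_mul t)).add (hint.const_mul c)
  have hmono : ∫ a, exp (t * X a) ∂ν ≤ ∫ a, (1 + t * X a + c * exp (|X a|/L)) ∂ν :=
    integral_mono hexpint hrhsint hpt
  have hval : ∫ a, (1 + t * X a + c * exp (|X a|/L)) ∂ν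
      = 1 + t * (∫ a, X a ∂ν) + c * ∫ a, exp (|X a|/L) ∂ν := by
    have h1 : Integrable (fun a => 1 + t * X a) ν :=
      (integrable_const 1).add (hXint.const_mul t)
    have h2 : Integrable (fun a => t * X a) ν := hXint.const_mul t
    rw [integral_add h1 (hint.const_mul c),
        integral_add (integrable_const (1:ℝ)) h2,
        integral_const, integral_const_mul, integral_const_mul]
    simp
  have hfinal : 1 + t * (∫ a, X a ∂ν) + c * ∫ a, exp (|X a|/L) ∂ν
      ≤ exp (t * (∫ a, X a ∂ν) + t^2 * (8*L^2*C^2*Real.exp (-2))) := by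
    have h7 : c * ∫ a, exp (|X a|/L) ∂ν ≤ t^2 * (8*L^2*C^2*Real.exp (-2)) := by
      calc c * ∫ a, exp (|X a|/L) ∂ν ≤ c * C^2 := mul_le_mul_of_nonneg_left hC2 hc0
        _ = t^2 * (8*L^2*C^2*Real.exp (-2)) := by rw [hc]; ring
    have h8 := Real.add_one_le_exp (t * (∫ a, X a ∂ν) + t^2 * (8*L^2*C^2*Real.exp (-2)))
    linarith
  linarith [hval ▸ hmono]

/-- Bernstein-type exponential inequality for a U-statistic of order 2 with a
kernel having a finite exponential moment. -/
theorem stmt_14 {Ω E : Type*} [MeasurableSpace Ω] [MeasurableSpace E]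
    (μ : Measure Ω) [IsProbabilityMeasure μ]
    {n : ℕ} (hn : 2 ≤ n)
    (Z : Fin n → Ω → E) (hZ : ∀ i, Measurable (Z i))
    -- i.i.d. sample
    (hIndep : iIndepFun Z μ)
    (hid : ∀ i, Measure.map (Z i) μ = Measure.map (Z ⟨0, by omega⟩) μ)
    -- symmetric measurable kernel
    (h : E → E → ℝ) (hmeas : Measurable fun z : E × E => h z.1 z.2)
    (hsymm : ∀ z w, h z w = h w z)
    (L C : ℝ) (hL : 0 < L) (hC : 0 < C)
    (hCdef : C ^ 2
      = ∫ ω, Real.exp (|h (Z ⟨0, by omega⟩ ω) (Z ⟨1, by omega⟩ ω)| / L) ∂μ)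
    (hCfin : Integrable
      (fun ω => Real.exp (|h (Z ⟨0, by omega⟩ ω) (Z ⟨1, by omega⟩ ω)| / L)) μ)
    -- the U-statistic
    (U : Ω → ℝ)
    (hU : ∀ ω, U ω = (1 : ℝ) / (n * (n - 1))
      * ∑ i, ∑ j ∈ univ \ {i}, h (Z i ω) (Z j ω))
    (hUint : Integrable U μ) :
    ∀ u : ℝ, 0 < u →
      μ {ω | (∫ ω', U ω' ∂μ) + 2 * L * (C * Real.sqrt (6 * u / n) + 3 * u / n)
          < U ω}
        ≤ ENNReal.ofReal (Real.exp (-u)) := by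
  intro u hu
  classical
  have hn0 : 0 < n := by omega
  have h1n : 1 < n := by omega
  set i0 : Fin n := ⟨0, hn0⟩ with hi0def
  set i1 : Fin n := ⟨1, h1n⟩ with hi1def
  have hCdef' : C ^ 2 = ∫ ω, Real.exp (|h (Z i0 ω) (Z i1 ω)| / L) ∂μ := hCdef
  have hCfin' : Integrable (fun ω => Real.exp (|h (Z i0 ω) (Z i1 ω)| / L)) μ := hCfin
  have hid' : ∀ i, Measure.map (Z i) μ = Measure.map (Z i0) μ := hid
  haveI : Nonempty Ω := by
    by_contra hcon
    rw [not_nonempty_iff] at hcon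
    have h1 : μ Set.univ = 1 := measure_univ
    rw [Set.univ_eq_empty_iff.mpr hcon] at h1
    simp at h1
  haveI : Nonempty E := ⟨Z i0 (Classical.arbitrary Ω)⟩
  set N : ℕ := n / 2 with hNdef
  have hN1 : 1 ≤ N := by omega
  have hN3 : n ≤ 3 * N := by omega
  have hNR : (0:ℝ) < N := by exact_mod_cast hN1
  set X0 : Ω → ℝ := fun ω => h (Z i0 ω) (Z i1 ω) with hX0
  set m0 : ℝ := ∫ ω, X0 ω ∂μ with hm0
  have hi01 : i0 ≠ i1 := by
    rw [hi0def, hi1def]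
    intro hcon
    exact absurd (congrArg Fin.val hcon) (by norm_num)
  have hm01 : Measurable fun ω => (Z i0 ω, Z i1 ω) := (hZ i0).prodMk (hZ i1)
  -- identical pair distributions
  have hpairmap : ∀ i j : Fin n, i ≠ j →
      Measure.map (fun ω => (Z i ω, Z j ω)) μ = Measure.map (fun ω => (Z i0 ω, Z i1 ω)) μ := by
    intro i j hij
    have hIFij : IndepFun (Z i) (Z j) μ := hIndep.indepFun hij
    have hIF01 : IndepFun (Z i0) (Z i1) μ := hIndep.indepFun hi01
    rw [(indepFun_iff_map_prod_eq_prod_map_map (hZ i).aemeasurable (hZ j).aemeasurable).mp hIFij,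
      (indepFun_iff_map_prod_eq_prod_map_map (hZ i0).aemeasurable (hZ i1).aemeasurable).mp hIF01,
      hid' i, hid' j, hid' i1]
  have htransI : ∀ (g : E → E → ℝ), Measurable (fun p : E × E => g p.1 p.2) →
      ∀ i j : Fin n, i ≠ j →
      Integrable (fun ω => g (Z i0 ω) (Z i1 ω)) μ →
        Integrable (fun ω => g (Z i ω) (Z j ω)) μ := by
    intro g hg i j hij hI
    have hmij : Measurable fun ω => (Z i ω, Z j ω) := (hZ i).prodMk (hZ j)
    have e1 : Integrable (fun p : E × E => g p.1 p.2)
        (Measure.map (fun ω => (Z i ω, Z j ω)) μ) := by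
      rw [hpairmap i j hij,
        integrable_map_measure hg.aestronglyMeasurable hm01.aemeasurable]
      exact hI
    rw [integrable_map_measure hg.aestronglyMeasurable hmij.aemeasurable] at e1
    exact e1
  have htransV : ∀ (g : E → E → ℝ), Measurable (fun p : E × E => g p.1 p.2) →
      ∀ i j : Fin n, i ≠ j →
      ∫ ω, g (Z i ω) (Z j ω) ∂μ = ∫ ω, g (Z i0 ω) (Z i1 ω) ∂μ := by
    intro g hg i j hij
    have hmij : Measurable fun ω => (Z i ω, Z j ω) := (hZ i).prodMk (hZ j)
    rw [← integral_map hmij.aemeasurable hg.aestronglyMeasurable,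
      ← integral_map hm01.aemeasurable hg.aestronglyMeasurable, hpairmap i j hij]
  -- integrability of X0
  have hmeasX0 : Measurable X0 := hmeas.comp ((hZ i0).prodMk (hZ i1))
  have habsL : ∀ x : ℝ, |x| ≤ L * Real.exp (|x|/L) := by
    intro x
    have h1 := Real.add_one_le_exp (|x|/L)
    have h2 : |x|/L ≤ Real.exp (|x|/L) := by linarith
    calc |x| = L * (|x|/L) := by field_simp
      _ ≤ L * Real.exp (|x|/L) := mul_le_mul_of_nonneg_left h2 hL.le
  have hX0int : Integrable X0 μ := by
    refine (hCfin'.const_mul L).mono' hmeasX0.aestronglyMeasurable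
      (Filter.Eventually.of_forall fun ω => ?_)
    rw [Real.norm_eq_abs]
    exact habsL (X0 ω)
  -- expectation of U
  have hnR : (2:ℝ) ≤ n := by exact_mod_cast hn
  have hn0R : (n:ℝ) ≠ 0 := by positivity
  have hn1R : (n:ℝ) - 1 ≠ 0 := by intro hcon; nlinarith
  have hne' : ∀ (i : Fin n) (j : Fin n), j ∈ univ \ {i} → i ≠ j := by
    intro i j hj
    simp only [mem_sdiff, mem_univ, true_and, mem_singleton] at hj
    exact fun hcon => hj hcon.symm
  have hintij : ∀ i j : Fin n, i ≠ j → Integrable (fun ω => h (Z i ω) (Z j ω)) μ :=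
    fun i j hij => htransI h hmeas i j hij hX0int
  have hvalij : ∀ i j : Fin n, i ≠ j → ∫ ω, h (Z i ω) (Z j ω) ∂μ = m0 :=
    fun i j hij => htransV h hmeas i j hij
  have hcard1 : ∀ i : Fin n, ((univ \ {i} : Finset (Fin n)).card : ℝ) = (n:ℝ) - 1 := by
    intro i
    rw [Finset.card_sdiff_of_subset (by simp)]
    simp only [card_univ, Fintype.card_fin, Finset.card_singleton]
    push_cast [show 1 ≤ n by omega]
    ring
  have hEU : ∫ ω, U ω ∂μ = m0 := by
    have e0 : U = fun ω => (1:ℝ)/(n*((n:ℝ)-1)) * ∑ i, ∑ j ∈ univ \ {i}, h (Z i ω) (Z j ω) :=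
      funext hU
    rw [e0, integral_const_mul,
      integral_finset_sum _ (fun i _ =>
        integrable_finset_sum _ (fun j hj => hintij i j (hne' i j hj)))]
    have e1 : ∀ i : Fin n, ∫ ω, ∑ j ∈ univ \ {i}, h (Z i ω) (Z j ω) ∂μ = ((n:ℝ)-1) * m0 := by
      intro i
      rw [integral_finset_sum _ (fun j hj => hintij i j (hne' i j hj)),
        Finset.sum_congr rfl (fun j hj => hvalij i j (hne' i j hj)), Finset.sum_const,
        nsmul_eq_mul, hcard1 i]
    rw [Finset.sum_congr rfl (fun i _ => e1 i), Finset.sum_const, nsmul_eq_mul, card_univ,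
      Fintype.card_fin]
    field_simp
  -- Chernoff parameters
  set t : ℝ := min (1/(2*L)) (Real.sqrt (u/N) / (2*C*L)) with ht
  have ht0 : 0 ≤ t := le_min (by positivity) (by positivity)
  have ht12 : t ≤ 1/(2*L) := min_le_left _ _
  set τ : ℝ := t * N with hτ
  have hτ0 : 0 ≤ τ := mul_nonneg ht0 hNR.le
  obtain ⟨hmgfI, hmgfB⟩ := aux_mgf_bound μ X0 hmeasX0.aestronglyMeasurable L C t hL ht0 ht12
    hCfin' hCdef'.ge
  have hgexp : Measurable (fun p : E × E => Real.exp (t * h p.1 p.2)) :=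
    Real.measurable_exp.comp (hmeas.const_mul t)
  have hexpintij : ∀ i j : Fin n, i ≠ j →
      Integrable (fun ω => Real.exp (t * h (Z i ω) (Z j ω))) μ :=
    fun i j hij => htransI (fun x y => Real.exp (t * h x y)) hgexp i j hij hmgfI
  have hexpvalij : ∀ i j : Fin n, i ≠ j →
      ∫ ω, Real.exp (t * h (Z i ω) (Z j ω)) ∂μ = ∫ ω, Real.exp (t * X0 ω) ∂μ :=
    fun i j hij => htransV (fun x y => Real.exp (t * h x y)) hgexp i j hij
  -- index functions
  set idx : ℕ → Fin n := fun p => ⟨p % n, Nat.mod_lt _ hn0⟩ with hidx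
  have hidx_inj : ∀ p q, p < n → q < n → idx p = idx q → p = q := by
    intro p q hp hq hpq
    have := congrArg Fin.val hpq
    simpa [hidx, Nat.mod_eq_of_lt hp, Nat.mod_eq_of_lt hq] using this
  set W : Equiv.Perm (Fin n) → Ω → ℝ :=
    fun σ ω => (∑ k ∈ range N, h (Z (σ (idx (2*k))) ω) (Z (σ (idx (2*k+1))) ω)) / N with hW
  have hcP0 : (0:ℝ) < (Fintype.card (Equiv.Perm (Fin n)) : ℝ) := by
    have : 0 < Fintype.card (Equiv.Perm (Fin n)) := Fintype.card_pos
    exact_mod_cast this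
  -- Hoeffding decomposition
  have hHoeff : ∀ ω, ∑ σ : Equiv.Perm (Fin n), W σ ω
      = (Fintype.card (Equiv.Perm (Fin n)) : ℝ) * U ω := by
    intro ω
    simp only [hW, ← Finset.sum_div]
    rw [Finset.sum_comm]
    have e2 : ∀ k ∈ range N,
        ∑ σ : Equiv.Perm (Fin n), h (Z (σ (idx (2*k))) ω) (Z (σ (idx (2*k+1))) ω)
        = (Fintype.card (Equiv.Perm (Fin n)) : ℝ)/((n:ℝ)*((n:ℝ)-1))
            * ∑ i, ∑ j ∈ univ \ {i}, h (Z i ω) (Z j ω) := by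
      intro k hk
      rw [Finset.mem_range] at hk
      exact aux_perm_sum hn (fun i j => h (Z i ω) (Z j ω))
        (fun hcon => by have := hidx_inj _ _ (by omega) (by omega) hcon; omega)
    rw [Finset.sum_congr rfl e2, Finset.sum_const, nsmul_eq_mul, Finset.card_range, hU ω]
    field_simp
  -- per-permutation mgf bound
  have hWfact : ∀ σ : Equiv.Perm (Fin n),
      Integrable (fun ω => Real.exp (τ * W σ ω)) μ ∧
      ∫ ω, Real.exp (τ * W σ ω) ∂μ
        ≤ Real.exp (τ * m0 + N * t^2 * (8*L^2*C^2*Real.exp (-2))) := by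
    intro σ
    have hdisj : ∀ k l, k < N → l < N → k ≠ l →
        σ (idx (2*k)) ≠ σ (idx (2*l)) ∧ σ (idx (2*k)) ≠ σ (idx (2*l+1))
          ∧ σ (idx (2*k+1)) ≠ σ (idx (2*l)) ∧ σ (idx (2*k+1)) ≠ σ (idx (2*l+1)) := by
      intro k l hk hl hkl
      refine ⟨?_, ?_, ?_, ?_⟩ <;>
        · intro hcon
          have := hidx_inj _ _ (by omega) (by omega) (σ.injective hcon)
          omega
    have habk : ∀ k, k < N → σ (idx (2*k)) ≠ σ (idx (2*k+1)) := by
      intro k hk hcon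
      have := hidx_inj _ _ (by omega) (by omega) (σ.injective hcon)
      omega
    obtain ⟨hPint, hPval⟩ := aux_indep_prod hZ hIndep (fun x y => Real.exp (t * h x y)) hgexp
      (fun k => σ (idx (2*k))) (fun k => σ (idx (2*k+1))) N hdisj
      (fun k hk => hexpintij _ _ (habk k hk))
    have heqexp : (fun ω => Real.exp (τ * W σ ω))
        = fun ω => ∏ k ∈ range N,
            Real.exp (t * h (Z (σ (idx (2*k))) ω) (Z (σ (idx (2*k+1))) ω)) := by
      funext ω
      rw [← Real.exp_sum]
      congr 1
      simp only [hW]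
      rw [← Finset.mul_sum, hτ]
      field_simp
      try ring
    constructor
    · rw [heqexp]; exact hPint
    · rw [heqexp, hPval,
        Finset.prod_congr rfl (fun k hk => hexpvalij _ _ (habk k (Finset.mem_range.mp hk))),
        Finset.prod_const, Finset.card_range]
      have hbase0 : 0 ≤ ∫ ω, Real.exp (t * X0 ω) ∂μ :=
        integral_nonneg (fun ω => (Real.exp_pos _).le)
      calc (∫ ω, Real.exp (t * X0 ω) ∂μ)^N
          ≤ (Real.exp (t * m0 + t^2 * (8*L^2*C^2*Real.exp (-2))))^N :=
            pow_le_pow_left₀ hbase0 hmgfB N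
        _ = Real.exp (τ * m0 + N * t^2 * (8*L^2*C^2*Real.exp (-2))) := by
            rw [← Real.exp_nat_mul]
            congr 1
            rw [hτ]
            ring
  -- Jensen step
  have hexpU_meas : AEStronglyMeasurable (fun ω => Real.exp (τ * U ω)) μ :=
    Real.continuous_exp.comp_aestronglyMeasurable (hUint.aestronglyMeasurable.const_mul τ)
  have hJensen : ∀ ω, Real.exp (τ * U ω)
      ≤ ∑ σ : Equiv.Perm (Fin n), ((Fintype.card (Equiv.Perm (Fin n)) : ℝ))⁻¹
          * Real.exp (τ * W σ ω) := by
    intro ω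
    have hUω : U ω = (∑ σ : Equiv.Perm (Fin n), W σ ω)
        / (Fintype.card (Equiv.Perm (Fin n)) : ℝ) := by
      rw [hHoeff ω]
      field_simp
    have h1 : τ * U ω = ∑ σ : Equiv.Perm (Fin n),
        ((Fintype.card (Equiv.Perm (Fin n)) : ℝ))⁻¹ • (τ * W σ ω) := by
      simp only [smul_eq_mul]
      rw [← Finset.mul_sum, ← Finset.mul_sum, hUω]
      field_simp
      try ring
    rw [h1]
    have hsum1 : ∑ _σ : Equiv.Perm (Fin n),
        ((Fintype.card (Equiv.Perm (Fin n)) : ℝ))⁻¹ = 1 := by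
      rw [Finset.sum_const, card_univ, nsmul_eq_mul]
      exact mul_inv_cancel₀ hcP0.ne'
    have := convexOn_exp.map_sum_le (t := (univ : Finset (Equiv.Perm (Fin n))))
      (w := fun _ => ((Fintype.card (Equiv.Perm (Fin n)) : ℝ))⁻¹)
      (p := fun σ => τ * W σ ω)
      (fun _ _ => by positivity) hsum1 (fun _ _ => Set.mem_univ _)
    simpa [smul_eq_mul] using this
  have hRHSint : Integrable (fun ω => ∑ σ : Equiv.Perm (Fin n),
      ((Fintype.card (Equiv.Perm (Fin n)) : ℝ))⁻¹ * Real.exp (τ * W σ ω)) μ :=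
    integrable_finset_sum _ (fun σ _ => ((hWfact σ).1.const_mul _))
  have hexpUint : Integrable (fun ω => Real.exp (τ * U ω)) μ := by
    refine hRHSint.mono' hexpU_meas (Filter.Eventually.of_forall fun ω => ?_)
    rw [Real.norm_eq_abs, abs_of_pos (Real.exp_pos _)]
    exact hJensen ω
  have hmgfU : ∫ ω, Real.exp (τ * U ω) ∂μ
      ≤ Real.exp (τ * m0 + N * t^2 * (8*L^2*C^2*Real.exp (-2))) := by
    calc ∫ ω, Real.exp (τ * U ω) ∂μ
        ≤ ∫ ω, ∑ σ : Equiv.Perm (Fin n),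
            ((Fintype.card (Equiv.Perm (Fin n)) : ℝ))⁻¹ * Real.exp (τ * W σ ω) ∂μ :=
          integral_mono hexpUint hRHSint hJensen
      _ = ∑ σ : Equiv.Perm (Fin n), ((Fintype.card (Equiv.Perm (Fin n)) : ℝ))⁻¹
            * ∫ ω, Real.exp (τ * W σ ω) ∂μ := by
          rw [integral_finset_sum _ (fun σ _ => ((hWfact σ).1.const_mul _))]
          exact Finset.sum_congr rfl (fun σ _ => integral_const_mul _ _)
      _ ≤ ∑ _σ : Equiv.Perm (Fin n), ((Fintype.card (Equiv.Perm (Fin n)) : ℝ))⁻¹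
            * Real.exp (τ * m0 + N * t^2 * (8*L^2*C^2*Real.exp (-2))) := by
          apply Finset.sum_le_sum
          intro σ _
          exact mul_le_mul_of_nonneg_left (hWfact σ).2 (by positivity)
      _ = Real.exp (τ * m0 + N * t^2 * (8*L^2*C^2*Real.exp (-2))) := by
          rw [Finset.sum_const, card_univ, nsmul_eq_mul, ← mul_assoc,
            mul_inv_cancel₀ hcP0.ne', one_mul]
  -- Chernoff bound and conclusion
  set r : ℝ := 2 * L * (C * Real.sqrt (6 * u / n) + 3 * u / n) with hr
  have hch := measure_ge_le_exp_mul_mgf (μ := μ) (X := U) (t := τ) (m0 + r) hτ0 hexpUint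
  have harith := aux_arith u L C n N hu hL hC hN1 hN3 hn
  rw [← ht, ← hr] at harith
  have hch2 : (μ {ω | m0 + r ≤ U ω}).toReal ≤ Real.exp (-u) := by
    have h3 : Real.exp (-τ*(m0+r)) * mgf U μ τ
        ≤ Real.exp (-τ*(m0+r)) * Real.exp (τ * m0 + N * t^2 * (8*L^2*C^2*Real.exp (-2))) := by
      apply mul_le_mul_of_nonneg_left _ (Real.exp_pos _).le
      exact hmgfU
    have h4 : Real.exp (-τ*(m0+r)) * Real.exp (τ * m0 + N * t^2 * (8*L^2*C^2*Real.exp (-2)))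
        ≤ Real.exp (-u) := by
      rw [← Real.exp_add]
      apply Real.exp_le_exp.mpr
      rw [hτ]
      nlinarith [harith]
    exact le_trans hch (le_trans h3 h4)
  have hsub : {ω | (∫ ω', U ω' ∂μ) + r < U ω} ⊆ {ω | m0 + r ≤ U ω} := by
    intro ω hω
    rw [Set.mem_setOf_eq] at hω ⊢
    rw [hEU] at hω
    linarith
  calc μ {ω | (∫ ω', U ω' ∂μ) + r < U ω} ≤ μ {ω | m0 + r ≤ U ω} := measure_mono hsub
    _ = ENNReal.ofReal ((μ {ω | m0 + r ≤ U ω}).toReal) :=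
        (ENNReal.ofReal_toReal (measure_ne_top _ _)).symm
    _ ≤ ENNReal.ofReal (Real.exp (-u)) := ENNReal.ofReal_le_ofReal hch2
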